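/- Let R be a left commutative subrng of a left commutative rng U with U graded integral over R, p a Hu-Liu prime ideal of R, and q a maximal element of {J ideal of U : J ∩ R ⊆ p} satisfying q ∩ R = p. If x₀, y₀ ∈ U₀ \ q₀, then x₀y₀ ∉ q₀, where U₀ = U·1ℓ and q₀ = q ∩ U₀. -/

import Mathlib

universe u

/-- A left commutative rng: an associative rng with `x*y*z = y*x*z`, a fixed left
identity `e = 1ℓ`, whose additive halo `{x : x*e = 0}` is a commutative unital ring
under a local product `sharp` with local identity `ls = 1♯`, satisfying the local
strong Hu-Liu triassociative law. -/
structure LeftCommRng (R : Type u) [NonUnitalRing R] where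
  e : R
  sharp : R → R → R
  ls : R
  left_comm : ∀ x y z : R, x * y * z = y * x * z
  e_mul : ∀ x : R, e * x = x
  ls_halo : ls * e = 0
  sharp_halo : ∀ a b : R, a * e = 0 → b * e = 0 → sharp a b * e = 0
  sharp_assoc : ∀ a b c : R, a * e = 0 → b * e = 0 → c * e = 0 →
    sharp (sharp a b) c = sharp a (sharp b c)
  sharp_comm : ∀ a b : R, a * e = 0 → b * e = 0 → sharp a b = sharp b a
  sharp_add : ∀ a b c : R, a * e = 0 → b * e = 0 → c * e = 0 →
    sharp a (b + c) = sharp a b + sharp a c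
  sharp_ls : ∀ a : R, a * e = 0 → sharp ls a = a
  triassoc : ∀ (x a b : R), a * e = 0 → b * e = 0 →
    sharp (x * a) b = x * sharp a b

/-- The commutative product `x •_{1ℓ} y := xy + yx − (yx)·1ℓ`. -/
def LeftCommRng.bullet {R : Type u} [NonUnitalRing R] (L : LeftCommRng R) (x y : R) : R :=
  x * y + y * x - y * x * L.e

/-- A left commutative subrng `S` of the ambient left commutative rng. -/
structure IsLCSubrng {U : Type u} [NonUnitalRing U] (L : LeftCommRng U) (S : Set U) : Prop where
  e_mem : L.e ∈ S
  ls_mem : L.ls ∈ S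
  add_mem : ∀ {a b : U}, a ∈ S → b ∈ S → a + b ∈ S
  neg_mem : ∀ {a : U}, a ∈ S → -a ∈ S
  mul_mem : ∀ {a b : U}, a ∈ S → b ∈ S → a * b ∈ S
  sharp_mem : ∀ {a b : U}, a ∈ S → b ∈ S → a * L.e = 0 → b * L.e = 0 → L.sharp a b ∈ S

/-- An ideal `J` of the left commutative (sub)rng `S` (take `S = Set.univ` for an
ideal of the whole rng): an additive subgroup absorbing multiplication by `S` on
both sides, whose halo part is a `♯`-ideal. -/
structure IsLCIdealIn {U : Type u} [NonUnitalRing U] (L : LeftCommRng U) (S J : Set U) : Prop where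
  subset : J ⊆ S
  zero_mem : (0 : U) ∈ J
  add_mem : ∀ {a b : U}, a ∈ J → b ∈ J → a + b ∈ J
  neg_mem : ∀ {a : U}, a ∈ J → -a ∈ J
  mul_right : ∀ {a : U}, a ∈ J → ∀ r ∈ S, a * r ∈ J
  mul_left : ∀ {a : U}, a ∈ J → ∀ r ∈ S, r * a ∈ J
  sharp_mem : ∀ {a : U}, a ∈ J → a * L.e = 0 → ∀ b ∈ S, b * L.e = 0 → L.sharp a b ∈ J

/-- A Hu-Liu prime ideal `p` of the left commutative (sub)rng `S`. -/
structure IsHLPrimeIn {U : Type u} [NonUnitalRing U] (L : LeftCommRng U) (S p : Set U)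
    extends IsLCIdealIn L S p : Prop where
  ne_top : p ≠ S
  prime00 : ∀ x ∈ S, ∀ y ∈ S, x * L.e = x → y * L.e = y → x * y ∈ p → x ∈ p ∨ y ∈ p
  prime01 : ∀ x ∈ S, ∀ y ∈ S, x * L.e = x → y * L.e = 0 → x * y ∈ p → x ∈ p ∨ y ∈ p
  prime11 : ∀ x ∈ S, ∀ y ∈ S, x * L.e = 0 → y * L.e = 0 → L.sharp x y ∈ p → x ∈ p ∨ y ∈ p

/-- `pw e x n` is `xⁿ` (with the convention `pw e x 0 = e`, the left identity). -/
def pw {R : Type u} [NonUnitalRing R] (e x : R) : ℕ → R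
  | 0 => e
  | n + 1 => x * pw e x n

/-- `spow L u n` is the `n`-th `♯`-power `u^{♯n}` (with `spow L u 0 = 1♯`). -/
def LeftCommRng.spow {R : Type u} [NonUnitalRing R] (L : LeftCommRng R) (u : R) : ℕ → R
  | 0 => L.ls
  | n + 1 => L.sharp u (L.spow u n)

/-- `u` is integral over `R₀ = R·1ℓ` inside `(U₀, ·)`. -/
def Integral0 {U : Type u} [NonUnitalRing U] (L : LeftCommRng U) (R : Set U) (u : U) : Prop :=
  ∃ n : ℕ, 1 ≤ n ∧ ∃ a : ℕ → U, (∀ i, a i ∈ R ∧ a i * L.e = a i) ∧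
    pw L.e u n + ∑ i ∈ Finset.range n, a i * pw L.e u (n - 1 - i) = 0

/-- `u` is integral over `(R₁, ♯)` inside `(U₁, ♯)`. -/
def Integral1 {U : Type u} [NonUnitalRing U] (L : LeftCommRng U) (R : Set U) (u : U) : Prop :=
  ∃ n : ℕ, 1 ≤ n ∧ ∃ a : ℕ → U, (∀ i, a i ∈ R ∧ a i * L.e = 0) ∧
    L.spow u n + ∑ i ∈ Finset.range n, L.sharp (a i) (L.spow u (n - 1 - i)) = 0

/-- `U` is graded integral over the subrng `R`. -/
def GradedIntegral {U : Type u} [NonUnitalRing U] (L : LeftCommRng U) (R : Set U) : Prop :=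
  ∀ u : U, Integral0 L R (u * L.e) ∧ Integral1 L R (u - u * L.e)

/-!
If `x ∉ q`, then `q + xU` is an ideal strictly larger than `q`, so by maximality it contains some
`a ∈ R \ p`; likewise `q + yU` contains some `b ∈ R \ p`. When `xy ∈ q` (hence also `yx ∈ q`),
the products `a₀b₀`, `a₀b₁`, `b₀a₁` and `a₁ ♯ b₁` of the graded components of `a` and `b` all
lie in `q ∩ R = p`, and the three Hu-Liu primality conditions then force `a ∈ p` or `b ∈ p`.
-/

namespace LeftCommRng

variable {U : Type u} [NonUnitalRing U] (L : LeftCommRng U)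

theorem mul_e_mul_e (a : U) : a * L.e * L.e = a * L.e := by
  rw [mul_assoc, L.e_mul]

theorem sub_mul_e_mul_e (a : U) : (a - a * L.e) * L.e = 0 := by
  rw [sub_mul, L.mul_e_mul_e, sub_self]

theorem mul_e_mul_mul_e (a b : U) : a * L.e * (b * L.e) = a * b * L.e := by
  rw [mul_assoc a, L.e_mul, mul_assoc]

theorem mul_e_mul_sub_mul_e (a b : U) : a * L.e * (b - b * L.e) = a * b - a * b * L.e := by
  rw [mul_sub, L.mul_e_mul_mul_e, mul_assoc a, L.e_mul]

theorem sharp_add_left {a b c : U} (ha : a * L.e = 0) (hb : b * L.e = 0) (hc : c * L.e = 0) :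
    L.sharp (a + b) c = L.sharp a c + L.sharp b c := by
  have hab : (a + b) * L.e = 0 := by rw [add_mul, ha, hb, add_zero]
  rw [L.sharp_comm _ _ hab hc, L.sharp_add _ _ _ hc ha hb, L.sharp_comm _ _ hc ha,
    L.sharp_comm _ _ hc hb]

end LeftCommRng

namespace IsLCSubrng

variable {U : Type u} [NonUnitalRing U] {L : LeftCommRng U} {S : Set U}

theorem mul_e_mem (hS : IsLCSubrng L S) {a : U} (ha : a ∈ S) : a * L.e ∈ S :=
  hS.mul_mem ha hS.e_mem

theorem sub_mul_e_mem (hS : IsLCSubrng L S) {a : U} (ha : a ∈ S) : a - a * L.e ∈ S := by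
  rw [sub_eq_add_neg]
  exact hS.add_mem ha (hS.neg_mem (hS.mul_e_mem ha))

end IsLCSubrng

namespace IsLCIdealIn

variable {U : Type u} [NonUnitalRing U] {L : LeftCommRng U} {S J : Set U}

theorem sub_mem (hJ : IsLCIdealIn L S J) {a b : U} (ha : a ∈ J) (hb : b ∈ J) : a - b ∈ J := by
  rw [sub_eq_add_neg]
  exact hJ.add_mem ha (hJ.neg_mem hb)

theorem mem_of_mul_e_mem_of_sub_mem (hJ : IsLCIdealIn L S J) {a : U} (h₀ : a * L.e ∈ J)
    (h₁ : a - a * L.e ∈ J) : a ∈ J := by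
  simpa using hJ.add_mem h₀ h₁

theorem mul_e_mem (hJ : IsLCIdealIn L Set.univ J) {a : U} (ha : a ∈ J) : a * L.e ∈ J :=
  hJ.mul_right ha _ trivial

theorem sub_mul_e_mem (hJ : IsLCIdealIn L Set.univ J) {a : U} (ha : a ∈ J) :
    a - a * L.e ∈ J :=
  hJ.sub_mem ha (hJ.mul_e_mem ha)

end IsLCIdealIn

theorem IsHLPrimeIn.mem_or_mem_of_graded_products {U : Type u} [NonUnitalRing U]
    {L : LeftCommRng U} {S p : Set U} (hS : IsLCSubrng L S) (hp : IsHLPrimeIn L S p)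
    {a b : U} (ha : a ∈ S) (hb : b ∈ S) (h₀₀ : a * L.e * (b * L.e) ∈ p)
    (h₀₁ : a * L.e * (b - b * L.e) ∈ p) (h₁₀ : b * L.e * (a - a * L.e) ∈ p)
    (h₁₁ : L.sharp (a - a * L.e) (b - b * L.e) ∈ p) : a ∈ p ∨ b ∈ p := by
  have ha₀ := hS.mul_e_mem ha
  have hb₀ := hS.mul_e_mem hb
  have ha₁ := hS.sub_mul_e_mem ha
  have hb₁ := hS.sub_mul_e_mem hb
  have ha₀e := L.mul_e_mul_e a
  have hb₀e := L.mul_e_mul_e b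
  have ha₁e := L.sub_mul_e_mul_e a
  have hb₁e := L.sub_mul_e_mul_e b
  have hp_mem := @hp.toIsLCIdealIn.mem_of_mul_e_mem_of_sub_mem
  by_cases ha₀p : a * L.e ∈ p
  · by_cases ha₁p : a - a * L.e ∈ p
    · exact Or.inl (hp_mem ha₀p ha₁p)
    · exact Or.inr (hp_mem ((hp.prime01 _ hb₀ _ ha₁ hb₀e ha₁e h₁₀).resolve_right ha₁p)
        ((hp.prime11 _ ha₁ _ hb₁ ha₁e hb₁e h₁₁).resolve_left ha₁p))
  · exact Or.inr (hp_mem ((hp.prime00 _ ha₀ _ hb₀ ha₀e hb₀e h₀₀).resolve_left ha₀p)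
      ((hp.prime01 _ ha₀ _ hb₁ ha₀e hb₁e h₀₁).resolve_left ha₀p))

def addMulSet {U : Type u} [NonUnitalRing U] (q : Set U) (x : U) : Set U :=
  {w | ∃ t ∈ q, ∃ u, w = t + x * u}

section AddMulSet

variable {U : Type u} [NonUnitalRing U] {L : LeftCommRng U} {q : Set U} {x y a b : U}

theorem subset_addMulSet (q : Set U) (x : U) : q ⊆ addMulSet q x :=
  fun t ht => ⟨t, ht, 0, by rw [mul_zero, add_zero]⟩

theorem mem_addMulSet_self (hq₀ : (0 : U) ∈ q) (hx : x * L.e = x) : x ∈ addMulSet q x :=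
  ⟨0, hq₀, L.e, by rw [hx, zero_add]⟩

theorem IsLCIdealIn.exists_halo_of_mem_addMulSet (hq : IsLCIdealIn L Set.univ q)
    (ha : a ∈ addMulSet q x) (hae : a * L.e = 0) :
    ∃ t ∈ q, t * L.e = 0 ∧ ∃ u : U, u * L.e = 0 ∧ a = t + x * u := by
  obtain ⟨t, ht, u, rfl⟩ := ha
  -- Move the degree-zero part `x (u e) = -(t e)` of `x u` over to `t`.
  have hxu₀ : x * (u * L.e) = -(t * L.e) := by
    rw [add_mul, mul_assoc] at hae
    exact eq_neg_of_add_eq_zero_right hae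
  refine ⟨t + x * (u * L.e), hq.add_mem ht (hxu₀ ▸ hq.neg_mem (hq.mul_e_mem ht)), ?_,
    u - u * L.e, L.sub_mul_e_mul_e u, by rw [mul_sub]; abel⟩
  rw [add_mul, mul_assoc x, L.mul_e_mul_e, ← mul_assoc, ← add_mul, hae]

theorem isLCIdealIn_addMulSet (hq : IsLCIdealIn L Set.univ q) (x : U) :
    IsLCIdealIn L Set.univ (addMulSet q x) where
  subset := Set.subset_univ _
  zero_mem := subset_addMulSet q x hq.zero_mem
  add_mem := by
    rintro _ _ ⟨t, ht, u, rfl⟩ ⟨s, hs, v, rfl⟩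
    exact ⟨t + s, hq.add_mem ht hs, u + v, by rw [mul_add]; abel⟩
  neg_mem := by
    rintro _ ⟨t, ht, u, rfl⟩
    exact ⟨-t, hq.neg_mem ht, -u, by rw [mul_neg]; abel⟩
  mul_right := by
    rintro _ ⟨t, ht, u, rfl⟩ r -
    exact ⟨t * r, hq.mul_right ht r trivial, u * r, by rw [add_mul, mul_assoc]⟩
  mul_left := by
    rintro _ ⟨t, ht, u, rfl⟩ r -
    exact ⟨r * t, hq.mul_left ht r trivial, r * u, by
      rw [mul_add, ← mul_assoc, L.left_comm, mul_assoc]⟩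
  sharp_mem := by
    intro a ha hae b _ hbe
    obtain ⟨t, ht, hte, u, hue, rfl⟩ := hq.exists_halo_of_mem_addMulSet ha hae
    have hxue : x * u * L.e = 0 := by rw [mul_assoc, hue, mul_zero]
    refine ⟨L.sharp t b, hq.sharp_mem ht hte b trivial hbe, L.sharp u b, ?_⟩
    rw [L.sharp_add_left hte hxue hbe, L.triassoc x u b hue hbe]

theorem IsLCIdealIn.mul_mem_of_mem_addMulSet (hq : IsLCIdealIn L Set.univ q) (hxy : x * y ∈ q)
    (ha : a ∈ addMulSet q x) (hb : b ∈ addMulSet q y) : a * b ∈ q := by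
  obtain ⟨t, ht, u, rfl⟩ := ha
  obtain ⟨s, hs, v, rfl⟩ := hb
  have hxuyv : x * u * (y * v) = u * (x * y * v) := by
    rw [← mul_assoc, L.left_comm x u y]
    simp only [mul_assoc]
  rw [add_mul, mul_add (x * u), hxuyv]
  exact hq.add_mem (hq.mul_right ht _ trivial)
    (hq.add_mem (hq.mul_left hs _ trivial) (hq.mul_left (hq.mul_right hxy v trivial) u trivial))

theorem IsLCIdealIn.sharp_mem_of_mem_addMulSet (hq : IsLCIdealIn L Set.univ q)
    (hxy : x * y ∈ q) (ha : a ∈ addMulSet q x) (hb : b ∈ addMulSet q y) (hae : a * L.e = 0)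
    (hbe : b * L.e = 0) : L.sharp a b ∈ q := by
  obtain ⟨t, ht, hte, u, hue, rfl⟩ := hq.exists_halo_of_mem_addMulSet ha hae
  obtain ⟨s, hs, hse, v, hve, rfl⟩ := hq.exists_halo_of_mem_addMulSet hb hbe
  have hxue : x * u * L.e = 0 := by rw [mul_assoc, hue, mul_zero]
  have hyve : y * v * L.e = 0 := by rw [mul_assoc, hve, mul_zero]
  have hexpand : L.sharp (t + x * u) (s + y * v) =
      L.sharp t (s + y * v) + (x * L.sharp s u + x * y * L.sharp v u) := by
    rw [L.sharp_add_left hte hxue hbe, L.triassoc x u _ hue hbe, L.sharp_add _ _ _ hue hse hyve,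
      L.sharp_comm _ _ hue hse, L.sharp_comm _ _ hue hyve, L.triassoc y v u hve hue, mul_add,
      mul_assoc]
  rw [hexpand]
  exact hq.add_mem (hq.sharp_mem ht hte _ trivial hbe) (hq.add_mem
    (hq.mul_left (hq.sharp_mem hs hse u trivial hue) x trivial) (hq.mul_right hxy _ trivial))

end AddMulSet

theorem maximal_ideal_zero_part_prime_general {U : Type u} [NonUnitalRing U] (L : LeftCommRng U)
    (R : Set U) (hR : IsLCSubrng L R)
    (p : Set U) (hp : IsHLPrimeIn L R p)
    (q : Set U) (hq : IsLCIdealIn L Set.univ q)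
    (hmax : ∀ J : Set U, IsLCIdealIn L Set.univ J → J ∩ R ⊆ p → q ⊆ J → J = q)
    (hqR : q ∩ R = p) :
    ∀ x y : U, x * L.e = x → y * L.e = y → x ∉ q → y ∉ q → x * y ∉ q := by
  intro x y hx hy hxq hyq hxy
  have hyx : y * x ∈ q := by
    have : y * x = x * y * L.e := by rw [L.left_comm, mul_assoc, hx]
    exact this ▸ hq.mul_e_mem hxy
  have escape : ∀ z, z * L.e = z → z ∉ q → ∃ a ∈ addMulSet q z, a ∈ R ∧ a ∉ p := by
    intro z hz hzq
    by_contra! h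
    have hJ := hmax _ (isLCIdealIn_addMulSet hq z) (fun a ha => h a ha.1 ha.2)
      (subset_addMulSet q z)
    exact hzq (hJ ▸ mem_addMulSet_self hq.zero_mem hz)
  obtain ⟨a, haJ, haR, hap⟩ := escape x hx hxq
  obtain ⟨b, hbJ, hbR, hbp⟩ := escape y hy hyq
  have hab := hq.mul_mem_of_mem_addMulSet hxy haJ hbJ
  have hba := hq.mul_mem_of_mem_addMulSet hyx hbJ haJ
  have h₁₁ := hq.sharp_mem_of_mem_addMulSet hxy
    ((isLCIdealIn_addMulSet hq x).sub_mul_e_mem haJ)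
    ((isLCIdealIn_addMulSet hq y).sub_mul_e_mem hbJ)
    (L.sub_mul_e_mul_e a) (L.sub_mul_e_mul_e b)
  have mem_p : ∀ w ∈ q, w ∈ R → w ∈ p := fun w hw hwR => hqR ▸ ⟨hw, hwR⟩
  rcases hp.mem_or_mem_of_graded_products hR haR hbR
    (mem_p _ (L.mul_e_mul_mul_e a b ▸ hq.mul_e_mem hab)
      (hR.mul_mem (hR.mul_e_mem haR) (hR.mul_e_mem hbR)))
    (mem_p _ (L.mul_e_mul_sub_mul_e a b ▸ hq.sub_mul_e_mem hab)
      (hR.mul_mem (hR.mul_e_mem haR) (hR.sub_mul_e_mem hbR)))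
    (mem_p _ (L.mul_e_mul_sub_mul_e b a ▸ hq.sub_mul_e_mem hba)
      (hR.mul_mem (hR.mul_e_mem hbR) (hR.sub_mul_e_mem haR)))
    (mem_p _ h₁₁ (hR.sharp_mem (hR.sub_mul_e_mem haR) (hR.sub_mul_e_mem hbR)
      (L.sub_mul_e_mul_e a) (L.sub_mul_e_mul_e b))) with h | h
  exacts [hap h, hbp h]

/-- for the maximal `q` with `q ∩ R = p`, the complement of `q₀` in `U₀`
is multiplicatively closed: `x₀, y₀ ∈ U₀ \ q₀ ⟹ x₀y₀ ∉ q₀`. -/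
theorem maximal_ideal_zero_part_prime {U : Type u} [NonUnitalRing U] (L : LeftCommRng U)
    (R : Set U) (hR : IsLCSubrng L R) (hint : GradedIntegral L R)
    (p : Set U) (hp : IsHLPrimeIn L R p)
    (q : Set U) (hq : IsLCIdealIn L Set.univ q) (hqp : q ∩ R ⊆ p)
    (hmax : ∀ J : Set U, IsLCIdealIn L Set.univ J → J ∩ R ⊆ p → q ⊆ J → J = q)
    (hqR : q ∩ R = p) :
    ∀ x y : U, x * L.e = x → y * L.e = y → x ∉ q → y ∉ q → x * y ∉ q :=
  maximal_ideal_zero_part_prime_general L R hR p hp q hq hmax hqR
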